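/- arXiv:1507.05949 — 4 statements merged into one kernel-verified Lean document; each statement's English description precedes it below -/
import Mathlib

section
/- Let S = ⟨n₁,...,n_e⟩ be a numerical semigroup with Frobenius number F(S), and let f ∈ PF(S) \ {F(S)} be such that F(S) - f ∈ PF(S). If A = (a_{ij}) is an RF-matrix for f and B = (b_{ij}) is an RF-matrix for F(S) - f, then a_{ij} · b_{ji} = 0 for all i ≠ j. -/
/-- The numerical semigroup generated by `n`, viewed inside `ℤ`. -/
def NS {e : ℕ} (n : Fin e → ℕ) : Set ℤ :=
  {x | ∃ a : Fin e → ℕ, x = ∑ j, (a j : ℤ) * n j}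

/-- Pseudo-Frobenius numbers of the numerical semigroup generated by `n`. -/
def PF {e : ℕ} (n : Fin e → ℕ) : Set ℤ :=
  {x | x ∉ NS n ∧ ∀ i, x + (n i : ℤ) ∈ NS n}

/-- `F` is the Frobenius number: the maximum of `ℤ \ S`. -/
def IsFrob {e : ℕ} (n : Fin e → ℕ) (F : ℤ) : Prop :=
  F ∉ NS n ∧ ∀ x : ℤ, F < x → x ∈ NS n

/-- Almost symmetry with respect to the Frobenius number `F`. -/
def AlmostSym {e : ℕ} (n : Fin e → ℕ) (F : ℤ) : Prop :=
  ∀ x : ℤ, x ∉ NS n → F - x ∉ NS n → (x ∈ PF n ∧ F - x ∈ PF n)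

/-- `A` is an RF-matrix for `f`. -/
def IsRF {e : ℕ} (n : Fin e → ℕ) (f : ℤ) (A : Matrix (Fin e) (Fin e) ℤ) : Prop :=
  (∀ i, A i i = -1) ∧ (∀ i j, i ≠ j → 0 ≤ A i j) ∧
    (∀ i, ∑ j, A i j * (n j : ℤ) = f)

/-- `K = λ_{ij} = max {K ∈ ℕ : K·n_j - n_i ∉ S}`. -/
def IsLam {e : ℕ} (n : Fin e → ℕ) (i j : Fin e) (K : ℕ) : Prop :=
  ((K : ℤ) * n j - n i ∉ NS n) ∧
    ∀ L : ℕ, ((L : ℤ) * n j - n i ∉ NS n) → L ≤ K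

/-- `n` is a minimal generating system. -/
def MinGen {e : ℕ} (n : Fin e → ℕ) : Prop :=
  ∀ i, ¬ ∃ a : Fin e → ℕ, a i = 0 ∧ (n i : ℤ) = ∑ j, (a j : ℤ) * n j

/-!
Adding row `i` of an RF-matrix for `f` to row `j` of an RF-matrix for `g` gives a vector whose
dot product with the generators is `f + g`. Its only possibly negative entries are the diagonal
`-1`s in positions `i` and `j`, and these are compensated by `A i j ≥ 1` and `B j i ≥ 1`; so if both
are positive, `f + g` lies in the semigroup. For `g = F - f` this would put `F` in the semigroup.
-/

theorem sum_mul_mem_NS_of_nonneg {e : ℕ} (n : Fin e → ℕ) {c : Fin e → ℤ} (hc : ∀ k, 0 ≤ c k) :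
    ∑ k, c k * n k ∈ NS n :=
  ⟨fun k => (c k).toNat, by simp only [Int.toNat_of_nonneg (hc _)]⟩

namespace IsRF

variable {e : ℕ} {n : Fin e → ℕ} {f g : ℤ} {A B : Matrix (Fin e) (Fin e) ℤ}

theorem add_row_nonneg (hA : IsRF n f A) (hB : IsRF n g B) {i j : Fin e} (hij : i ≠ j)
    (hAij : 0 < A i j) (hBji : 0 < B j i) (k : Fin e) : 0 ≤ A i k + B j k := by
  by_cases hki : k = i
  · subst hki
    have := hA.1 k
    omega
  by_cases hkj : k = j
  · subst hkj
    have := hB.1 k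
    omega
  have := hA.2.1 i k (Ne.symm hki)
  have := hB.2.1 j k (Ne.symm hkj)
  omega

theorem add_mem_NS (hA : IsRF n f A) (hB : IsRF n g B) {i j : Fin e} (hij : i ≠ j)
    (hAij : 0 < A i j) (hBji : 0 < B j i) : f + g ∈ NS n := by
  have hsum : ∑ k, (A i k + B j k) * n k = f + g := by
    simp only [add_mul, Finset.sum_add_distrib, hA.2.2 i, hB.2.2 j]
  exact hsum ▸ sum_mul_mem_NS_of_nonneg n (hA.add_row_nonneg hB hij hAij hBji)

end IsRF

theorem stmt3_general {e : ℕ} (n : Fin e → ℕ)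
    (F : ℤ) (hF : IsFrob n F)
    (f : ℤ)
    (A B : Matrix (Fin e) (Fin e) ℤ)
    (hA : IsRF n f A) (hB : IsRF n (F - f) B) :
    ∀ i j, i ≠ j → A i j * B j i = 0 := by
  intro i j hij
  by_contra hne
  obtain ⟨hAij, hBji⟩ := mul_ne_zero_iff.mp hne
  have hF_mem : f + (F - f) ∈ NS n :=
    hA.add_mem_NS hB hij ((hA.2.1 i j hij).lt_of_ne' hAij) ((hB.2.1 j i hij.symm).lt_of_ne' hBji)
  exact hF.1 (by simpa using hF_mem)

theorem stmt3 {e : ℕ} (n : Fin e → ℕ)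
    (hpos : ∀ i, 0 < n i)
    (hgcd : Finset.univ.gcd n = 1)
    (hmin : MinGen n)
    (F : ℤ) (hF : IsFrob n F)
    (f : ℤ) (hf : f ∈ PF n) (hfF : f ≠ F) (hFf : F - f ∈ PF n)
    (A B : Matrix (Fin e) (Fin e) ℤ)
    (hA : IsRF n f A) (hB : IsRF n (F - f) B) :
    ∀ i j, i ≠ j → A i j * B j i = 0 :=
  stmt3_general n F hF f A B hA hB
end

section
/- Let S = ⟨n₁,n₂,n₃,n₄⟩ be an almost symmetric numerical semigroup, f ∈ PF(S) \ {F(S)}, and let M be an RF-matrix for f such that some column of M contains no positive entry. Then f = F(S)/2. -/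
section Lincomb

variable {e : ℕ} (n : Fin e → ℕ)

def lincomb (a : Fin e → ℕ) : ℤ := ∑ j, (a j : ℤ) * n j

variable {n}

lemma lincomb_mem_NS (a : Fin e → ℕ) : lincomb n a ∈ NS n := ⟨a, rfl⟩

lemma lincomb_add (a b : Fin e → ℕ) : lincomb n (a + b) = lincomb n a + lincomb n b := by
  simp only [lincomb, Pi.add_apply, Nat.cast_add, add_mul, Finset.sum_add_distrib]

lemma lincomb_single (k : Fin e) : lincomb n (Pi.single k 1) = n k := by
  simp [lincomb, Pi.single_apply]

lemma lincomb_tsub {a b : Fin e → ℕ} (h : b ≤ a) :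
    lincomb n (a - b) = lincomb n a - lincomb n b := by
  rw [eq_sub_iff_add_eq, ← lincomb_add, tsub_add_cancel_of_le h]

lemma single_one_le_iff {a : Fin e → ℕ} {k : Fin e} : Pi.single k 1 ≤ a ↔ a k ≠ 0 := by
  refine ⟨fun h => by simpa [Nat.one_le_iff_ne_zero] using h k, fun h i => ?_⟩
  rcases eq_or_ne i k with rfl | hik
  · simpa [Nat.one_le_iff_ne_zero] using h
  · simp [hik]

lemma eq_lincomb_tsub_of_add_eq {x : ℤ} {c d : Fin e → ℕ} (h : x + lincomb n c = lincomb n d)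
    (hcd : c ≤ d) : x = lincomb n (d - c) := by
  rw [lincomb_tsub hcd]; linarith

lemma mem_NS_of_add_eq {x : ℤ} {c d : Fin e → ℕ} (h : x + lincomb n c = lincomb n d)
    (hcd : c ≤ d) : x ∈ NS n :=
  eq_lincomb_tsub_of_add_eq h hcd ▸ lincomb_mem_NS _

lemma NS_add_mem {x y : ℤ} (hx : x ∈ NS n) (hy : y ∈ NS n) : x + y ∈ NS n := by
  obtain ⟨a, rfl⟩ := hx; obtain ⟨b, rfl⟩ := hy
  exact lincomb_add a b ▸ lincomb_mem_NS _

lemma MinGen.ne_lincomb (hmin : MinGen n) {i : Fin e} {a : Fin e → ℕ} (hai : a i = 0) :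
    (n i : ℤ) ≠ lincomb n a :=
  fun h => hmin i ⟨a, hai, h⟩

end Lincomb

section PseudoFrobenius

variable {e : ℕ} {n : Fin e → ℕ}

lemma add_mem_NS_of_mem_PF {f s : ℤ} (hf : f ∈ PF n) (hs : s ∈ NS n) (hs0 : s ≠ 0) :
    f + s ∈ NS n := by
  obtain ⟨c, rfl⟩ : ∃ c, s = lincomb n c := hs
  obtain ⟨i, hi⟩ : ∃ i, c i ≠ 0 := by
    by_contra! h
    exact hs0 (by simp [lincomb, h])
  have hle : Pi.single i 1 ≤ c := single_one_le_iff.mpr hi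
  have hrest : lincomb n c - n i ∈ NS n :=
    mem_NS_of_add_eq (by rw [lincomb_single]; ring) hle
  simpa using NS_add_mem (hf.2 i) hrest

lemma eq_of_mem_PF_of_sub_mem {f g : ℤ} (hg : g ∈ PF n) (hf : f ∉ NS n) (hfg : f - g ∈ NS n) :
    f = g := by
  by_contra h
  exact hf (by simpa using add_mem_NS_of_mem_PF hg hfg (sub_ne_zero.mpr h))

lemma AlmostSym.sub_mem_PF {F f : ℤ} (hAS : AlmostSym n F) (hF : F ∉ NS n) (hf : f ∈ PF n)
    (hfF : f ≠ F) : F - f ∈ PF n := by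
  refine (hAS f hf.1 fun hg => hF ?_).2
  simpa using add_mem_NS_of_mem_PF hf hg (sub_ne_zero.mpr hfF.symm)

lemma exists_lincomb_eq_add_of_not_mem {x : ℤ} (hx : x ∉ NS n) {i : Fin e}
    (hxi : x + n i ∈ NS n) : ∃ c, x + n i = lincomb n c ∧ c i = 0 := by
  obtain ⟨c, hc⟩ := hxi
  refine ⟨c, hc, ?_⟩
  by_contra hci
  exact hx (mem_NS_of_add_eq (c := Pi.single i 1) (by rw [lincomb_single]; exact hc)
    (single_one_le_iff.mpr hci))

lemma eq_zero_of_add_not_mem {f g : ℤ} (hfg : f + g ∉ NS n) {i k : Fin e} {a b : Fin e → ℕ}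
    (ha : f + n i = lincomb n a) (hb : g + n k = lincomb n b) (hak : a k ≠ 0) : b i = 0 := by
  by_contra hbi
  have hf : f + n i - n k ∈ NS n :=
    mem_NS_of_add_eq (by rw [lincomb_single, ← ha]; ring) (single_one_le_iff.mpr hak)
  have hg : g + n k - n i ∈ NS n :=
    mem_NS_of_add_eq (by rw [lincomb_single, ← hb]; ring) (single_one_le_iff.mpr hbi)
  exact hfg (by convert NS_add_mem hf hg using 1; ring)

lemma IsRF.add_eq_lincomb {f : ℤ} {M : Matrix (Fin e) (Fin e) ℤ} (hM : IsRF n f M) (i : Fin e) :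
    f + n i = lincomb n (fun k => (M i k).toNat) := by
  have hcoef : ∀ k, ((M i k).toNat : ℤ) = M i k + if k = i then 1 else 0 := by
    intro k
    rcases eq_or_ne k i with rfl | hki
    · simp [hM.1 k]
    · simp [hki, Int.toNat_of_nonneg (hM.2.1 i k hki.symm)]
  simp only [lincomb, hcoef, add_mul, Finset.sum_add_distrib, hM.2.2 i, ite_mul, one_mul,
    zero_mul, Finset.sum_ite_eq', Finset.mem_univ, if_true]

lemma row_ne_zero {f : ℤ} {j k : Fin e} {a : Fin e → Fin e → ℕ} (hmin : MinGen n)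
    (ha : ∀ i, f + n i = lincomb n (a i)) (hkj : k ≠ j) (hak : a k k = 0) : a j ≠ 0 := by
  intro h0
  have hf : f = -n j := by
    have := ha j
    simp only [h0, lincomb, Pi.zero_apply, Nat.cast_zero, zero_mul, Finset.sum_const_zero] at this
    linarith
  apply hmin.ne_lincomb (i := k) (a := a k + Pi.single j 1) (by simp [hak, hkj])
  rw [lincomb_add, lincomb_single, ← ha k, hf]
  ring

end PseudoFrobenius

lemma partner_row_le_row {n : Fin 4 → ℕ} {f g : ℤ} {j m : Fin 4} {a b : Fin 4 → Fin 4 → ℕ}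
    (hmin : MinGen n) (hfg : f + g ∉ NS n) (hg : g ∉ NS n)
    (ha : ∀ i, f + n i = lincomb n (a i)) (had : ∀ i, a i i = 0) (haj : ∀ i, a i j = 0)
    (hb : ∀ i, g + n i = lincomb n (b i)) (hbd : ∀ i, b i i = 0)
    (hmj : m ≠ j) (hbmj : b m j = 0) : b m ≤ a m := by
  intro p
  by_contra! hlt
  have hpm : p ≠ m := by rintro rfl; simp [had, hbd] at hlt
  have hpj : p ≠ j := by rintro rfl; simp [haj, hbmj] at hlt
  have hapm : a p m = 0 :=
    eq_zero_of_add_not_mem (by rwa [add_comm]) (hb m) (ha p) (Nat.ne_zero_of_lt hlt)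
  have hrow : n m + lincomb n (a p) = lincomb n (a m + Pi.single p 1) := by
    rw [lincomb_add, lincomb_single, ← ha, ← ha]; ring
  -- otherwise `n m = lincomb n (a m + Pi.single p 1 - a p)` would not involve `n m`
  obtain ⟨l, hl⟩ : ∃ l, (a m + Pi.single p 1 : Fin 4 → ℕ) l < a p l := by
    by_contra! hle
    exact hmin.ne_lincomb (by simp [had, hapm, hpm.symm]) (eq_lincomb_tsub_of_add_eq hrow hle)
  have hlp : l ≠ p := by rintro rfl; simp [had] at hl
  have hlm : l ≠ m := by rintro rfl; simp [hapm] at hl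
  have hlj : l ≠ j := by rintro rfl; simp [haj] at hl
  apply hg
  refine mem_NS_of_add_eq (c := a m + Pi.single p 1) (d := b m + a p) ?_ fun x => ?_
  · rw [lincomb_add, lincomb_add, lincomb_single, ← ha, ← ha, ← hb]; ring
  by_cases hxp : x = p
  · subst hxp
    simp only [Pi.add_apply, Pi.single_eq_same, had, add_zero, Order.add_one_le_iff]
    omega
  by_cases hxm : x = m
  · subst hxm; simp [had, hxp]
  by_cases hxj : x = j
  · subst hxj; simp [haj, hxp]
  -- `l` is the only index outside `{j, m, p}`: this is where `e = 4` enters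
  obtain rfl : x = l := by omega
  simp only [Pi.add_apply, ne_eq, hxp, not_false_eq_true, Pi.single_eq_of_ne, add_zero] at hl ⊢
  omega

theorem stmt6_general (n : Fin 4 → ℕ)
    (hmin : MinGen n)
    (F : ℤ) (hF : IsFrob n F) (hAS : AlmostSym n F)
    (f : ℤ) (hf : f ∈ PF n) (hfF : f ≠ F)
    (M : Matrix (Fin 4) (Fin 4) ℤ) (hM : IsRF n f M)
    (hcol : ∃ j, ∀ i, M i j ≤ 0) :
    2 * f = F := by
  obtain ⟨j, hj⟩ := hcol
  have hg : F - f ∈ PF n := hAS.sub_mem_PF hF.1 hf hfF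
  have hfg : f + (F - f) ∉ NS n := by simpa using hF.1
  set a : Fin 4 → Fin 4 → ℕ := fun i k => (M i k).toNat
  have ha : ∀ i, f + n i = lincomb n (a i) := hM.add_eq_lincomb
  have had : ∀ i, a i i = 0 := fun i => by simp [a, hM.1 i]
  have haj : ∀ i, a i j = 0 := fun i => Int.toNat_eq_zero.mpr (hj i)
  choose b hb hbd using fun i => exists_lincomb_eq_add_of_not_mem hg.1 (hg.2 i)
  obtain ⟨k, hkj⟩ := exists_ne j
  obtain ⟨m, hm⟩ : ∃ m, a j m ≠ 0 := Function.ne_iff.mp (row_ne_zero hmin ha hkj (had k))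
  have hmj : m ≠ j := by rintro rfl; exact hm (had m)
  have hbmj : b m j = 0 := eq_zero_of_add_not_mem hfg (ha j) (hb m) hm
  have hle : b m ≤ a m := partner_row_le_row hmin hfg hg.1 ha had haj hb hbd hmj hbmj
  have hdiff : f - (F - f) ∈ NS n := mem_NS_of_add_eq (by rw [← hb, ← ha]; ring) hle
  have := eq_of_mem_PF_of_sub_mem hg hf.1 hdiff
  linarith

theorem stmt6 (n : Fin 4 → ℕ)
    (hpos : ∀ i, 0 < n i)
    (hgcd : Finset.univ.gcd n = 1)
    (hmin : MinGen n)
    (F : ℤ) (hF : IsFrob n F) (hAS : AlmostSym n F)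
    (f : ℤ) (hf : f ∈ PF n) (hfF : f ≠ F)
    (M : Matrix (Fin 4) (Fin 4) ℤ) (hM : IsRF n f M)
    (hcol : ∃ j, ∀ i, M i j ≤ 0) :
    2 * f = F :=
  stmt6_general n hmin F hF hAS f hf hfF M hM hcol
end

section
/- Let S = ⟨n₁,n₂,n₃,n₄⟩ be a numerical semigroup minimally generated by four elements, and suppose the submonoid T generated by n₂,n₃,n₄ is a numerical semigroup (gcd(n₂,n₃,n₄) = 1). If f ∈ PF(T) and f ≠ F(T), and also f ∈ PF(S) with F(S) - f ∉ S and S almost symmetric, then F(S) - f = f, i.e., f = F(S)/2. -/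
variable {e : ℕ}

namespace NS

variable {n : Fin e → ℕ}

theorem add_mem {x y : ℤ} (hx : x ∈ NS n) (hy : y ∈ NS n) : x + y ∈ NS n := by
  obtain ⟨a, rfl⟩ := hx
  obtain ⟨b, rfl⟩ := hy
  exact ⟨a + b, by simp [add_mul, Finset.sum_add_distrib]⟩

theorem natCast_mul_mem (k : ℕ) (i : Fin e) : (k : ℤ) * n i ∈ NS n :=
  ⟨Pi.single i k, by simp [Pi.single_apply]⟩

theorem sum_sub_mem_of_ne_zero (a : Fin e → ℕ) {i : Fin e} (hi : a i ≠ 0) :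
    ∑ j, (a j : ℤ) * n j - n i ∈ NS n := by
  refine ⟨Function.update a i (a i - 1), ?_⟩
  have hsplit (b : Fin e → ℕ) : ∑ j, (b j : ℤ) * n j
      = b i * n i + ∑ j ∈ Finset.univ.erase i, (b j : ℤ) * n j :=
    (Finset.add_sum_erase _ _ (Finset.mem_univ i)).symm
  have hrest : ∑ j ∈ Finset.univ.erase i, (Function.update a i (a i - 1) j : ℤ) * n j
      = ∑ j ∈ Finset.univ.erase i, (a j : ℤ) * n j :=
    Finset.sum_congr rfl fun j hj => by rw [Function.update_of_ne (Finset.ne_of_mem_erase hj)]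
  rw [hsplit a, hsplit (Function.update a i (a i - 1)), hrest, Function.update_self,
    Nat.cast_sub (Nat.one_le_iff_ne_zero.mpr hi)]
  ring

theorem exists_sub_mem {x : ℤ} (hx : x ∈ NS n) (hx0 : x ≠ 0) : ∃ i, x - n i ∈ NS n := by
  obtain ⟨a, rfl⟩ := hx
  obtain ⟨i, hi⟩ : ∃ i, a i ≠ 0 := by
    by_contra! h
    simp [h] at hx0
  exact ⟨i, sum_sub_mem_of_ne_zero a hi⟩

theorem exists_eq_natCast_mul {x : ℤ} (hx : x ∈ NS n) {d : Fin e}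
    (hd : ∀ i, x - n i ∈ NS n → i = d) : ∃ k : ℕ, x = k * n d := by
  obtain ⟨a, rfl⟩ := hx
  refine ⟨a d, Finset.sum_eq_single d (fun i _ hid => ?_) (by simp)⟩
  obtain hi | hi := eq_or_ne (a i) 0
  · simp [hi]
  · exact (hid (hd i (sum_sub_mem_of_ne_zero a hi))).elim

theorem add_succ_mul_mem {x : ℤ} {t : Fin e} (hx : x + n t ∈ NS n) (k : ℕ) :
    x + (k + 1 : ℕ) * n t ∈ NS n := by
  convert add_mem hx (natCast_mul_mem k t) using 1
  push_cast
  ring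

end NS

namespace NS

variable {n : Fin (e + 1) → ℕ}

theorem tail_subset : NS (Fin.tail n) ⊆ NS n := by
  rintro _ ⟨b, rfl⟩
  exact ⟨Fin.cons 0 b, by simp [Fin.sum_univ_succ, Fin.tail]⟩

theorem mem_tail_of_sub_not_mem {x : ℤ} (hx : x ∈ NS n) (h0 : x - n 0 ∉ NS n) :
    x ∈ NS (Fin.tail n) := by
  obtain ⟨a, rfl⟩ := hx
  have ha0 : a 0 = 0 := by
    by_contra ha0
    exact h0 (sum_sub_mem_of_ne_zero a ha0)
  exact ⟨Fin.tail a, by simp [Fin.sum_univ_succ, ha0, Fin.tail]⟩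

theorem exists_eq_natCast_mul_of_mem_tail {x : ℤ} (hx : x ∈ NS (Fin.tail n)) {d : Fin (e + 1)}
    (hd0 : d ≠ 0) (hd : ∀ i, i ≠ 0 → x - n i ∈ NS n → i = d) : ∃ k : ℕ, x = k * n d := by
  obtain ⟨d, rfl⟩ := Fin.exists_succ_eq.mpr hd0
  exact exists_eq_natCast_mul hx fun i hi =>
    Fin.succ_injective _ (hd i.succ (Fin.succ_ne_zero i) (tail_subset hi))

end NS

namespace MinGen

variable {n : Fin e → ℕ}

theorem pos (hmin : MinGen n) (i : Fin e) : 0 < n i := by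
  refine Nat.pos_of_ne_zero fun hi => hmin i ⟨0, rfl, ?_⟩
  simp [hi]

theorem natCast_ne_add_mul (hmin : MinGen n) {a b t : Fin e} (hab : a ≠ b) (hat : a ≠ t)
    (k : ℕ) : (n a : ℤ) ≠ n b + k * n t := by
  intro h
  refine hmin a ⟨Pi.single b 1 + Pi.single t k, by simp [hab, hat], ?_⟩
  simp [h, add_mul, Finset.sum_add_distrib, Pi.single_apply]

theorem eq_of_add_eq_natCast_mul (hmin : MinGen n) {x : ℤ} {a b t : Fin e} {k k' : ℕ}
    (ha : x + n a = k * n t) (hb : x + n b = k' * n t) (hta : t ≠ a) (htb : t ≠ b) : a = b := by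
  wlog hle : k' ≤ k generalizing a b k k'
  · exact (this hb ha htb hta (le_of_not_ge hle)).symm
  by_contra hab
  obtain ⟨j, rfl⟩ := Nat.exists_eq_add_of_le hle
  exact hmin.natCast_ne_add_mul hab hta.symm j (by push_cast at ha; linarith)

end MinGen

theorem eq_of_add_eq_natCast_mul {n : Fin e → ℕ} {f g x : ℤ} {t : Fin e} {k k' : ℕ}
    (hf : f ∉ NS n) (hg : g ∉ NS n) (hft : f + n t ∈ NS n) (hgt : g + n t ∈ NS n)
    (hfx : f + x = k * n t) (hgx : g + x = k' * n t) : f = g := by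
  wlog hle : k' ≤ k generalizing f g k k'
  · exact (this hg hf hgt hft hgx hfx (le_of_not_ge hle)).symm
  obtain ⟨_ | j, rfl⟩ := Nat.exists_eq_add_of_le hle
  · linarith
  · refine absurd ?_ hf
    convert NS.add_succ_mul_mem hgt j using 1
    push_cast at hfx ⊢
    linarith

theorem Fin.exists_fourth {a b : Fin 4} (ha : a ≠ 0) (hb : b ≠ 0) (hab : a ≠ b) :
    ∃ c, c ≠ 0 ∧ c ≠ a ∧ c ≠ b ∧ ∀ v, v = 0 ∨ v = a ∨ v = b ∨ v = c := by
  revert a b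
  decide

section Cover

variable {a b c : Fin 4} {P : Fin 4 → Prop}

theorem Fin.forall_of_cover (hcover : ∀ v, v = 0 ∨ v = a ∨ v = b ∨ v = c)
    (p0 : P 0) (pa : P a) (pb : P b) (pc : P c) (v : Fin 4) : P v := by
  rcases hcover v with rfl | rfl | rfl | rfl
  exacts [p0, pa, pb, pc]

theorem Fin.forall_ne_zero_of_cover (hcover : ∀ v, v = 0 ∨ v = a ∨ v = b ∨ v = c)
    (pa : P a) (pb : P b) (pc : P c) (v : Fin 4) (hv : v ≠ 0) : P v :=
  Fin.forall_of_cover hcover (P := fun v => v ≠ 0 → P v) (absurd rfl) (fun _ => pa)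
    (fun _ => pb) (fun _ => pc) v hv

end Cover

/-- The drops of `f + n_r` into generators other than `n_0` (`Rf r c`) and of `g + n_c`
(`Rg c r`), with `Pf r d`, `Pg c d` standing for "`f + n_r`, resp. `g + n_c`, is a multiple of
`n_d`". -/
structure IsDropPattern (Rf Rg Pf Pg : Fin 4 → Fin 4 → Prop) : Prop where
  not_rg_of_rf : ∀ r c, Rf r c → ¬ Rg c r
  rf_irrefl : ∀ r, ¬ Rf r r
  rg_irrefl : ∀ c, ¬ Rg c c
  exists_rf : ∀ r, ∃ c, c ≠ 0 ∧ Rf r c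
  pf_of_unique : ∀ r d, d ≠ 0 → (∀ c, c ≠ 0 → Rf r c → c = d) → Pf r d
  exists_rg : ∀ c, c ≠ 0 → ∃ r, Rg c r
  pg_of_unique : ∀ c d, c ≠ 0 → (∀ r, Rg c r → r = d) → Pg c d
  pf_inj : ∀ r r' d, Pf r d → Pf r' d → d ≠ r → d ≠ r' → r = r'
  pg_inj : ∀ c c' d, Pg c d → Pg c' d → d ≠ c → d ≠ c' → c = c'

namespace IsDropPattern

variable {Rf Rg Pf Pg : Fin 4 → Fin 4 → Prop} {a b c : Fin 4}

theorem exists_common_pure_of_rg (h : IsDropPattern Rf Rg Pf Pg)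
    (hcover : ∀ v, v = 0 ∨ v = a ∨ v = b ∨ v = c) (ha0 : a ≠ 0) (hb0 : b ≠ 0) (hba : b ≠ a)
    (hca : c ≠ a) (hcb : c ≠ b) (hga0 : ¬ Rg a 0) (hgca : Rg c a) :
    ∃ c d, Pf c d ∧ Pg c d := by
  have hPfab : Pf a b := h.pf_of_unique a b hb0 <| Fin.forall_ne_zero_of_cover hcover
    (fun hf => (h.rf_irrefl a hf).elim) (fun _ => rfl)
    (fun hf => (h.not_rg_of_rf a c hf hgca).elim)
  by_cases hgac : Rg a c
  · have hPfcb : Pf c b := h.pf_of_unique c b hb0 <| Fin.forall_ne_zero_of_cover hcover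
      (fun hf => (h.not_rg_of_rf c a hf hgac).elim) (fun _ => rfl)
      (fun hf => (h.rf_irrefl c hf).elim)
    exact (hca (h.pf_inj a c b hPfab hPfcb hba hcb.symm).symm).elim
  · refine ⟨a, b, hPfab, h.pg_of_unique a b ha0 <| Fin.forall_of_cover hcover ?_ ?_ ?_ ?_⟩
    exacts [fun hg => (hga0 hg).elim, fun hg => (h.rg_irrefl a hg).elim, fun _ => rfl,
      fun hg => (hgac hg).elim]

theorem exists_common_pure_of_not_rg (h : IsDropPattern Rf Rg Pf Pg)
    (hcover : ∀ v, v = 0 ∨ v = a ∨ v = b ∨ v = c) (ha0 : a ≠ 0) (hb0 : b ≠ 0) (hc0 : c ≠ 0)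
    (hba : b ≠ a) (hca : c ≠ a) (hcb : c ≠ b) (hgab : Rg a b) (hgca : ¬ Rg c a) :
    ∃ c d, Pf c d ∧ Pg c d := by
  have hfba : ¬ Rf b a := fun hf => h.not_rg_of_rf b a hf hgab
  have hfbc : Rf b c := by
    obtain ⟨v, hv0, hbv⟩ := h.exists_rf b
    exact Fin.forall_ne_zero_of_cover hcover (P := fun v => Rf b v → Rf b c)
      (fun hf => (hfba hf).elim) (fun hf => (h.rf_irrefl b hf).elim) id v hv0 hbv
  have hPfbc : Pf b c := h.pf_of_unique b c hc0 <| Fin.forall_ne_zero_of_cover hcover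
    (fun hf => (hfba hf).elim) (fun hf => (h.rf_irrefl b hf).elim) (fun _ => rfl)
  have hgc0 : ∀ r, Rg c r → r = 0 := Fin.forall_of_cover hcover (fun _ => rfl)
    (fun hg => (hgca hg).elim) (fun hg => (h.not_rg_of_rf b c hfbc hg).elim)
    (fun hg => (h.rg_irrefl c hg).elim)
  by_cases hgba : Rg b a
  · have hPfac : Pf a c := h.pf_of_unique a c hc0 <| Fin.forall_ne_zero_of_cover hcover
      (fun hf => (h.rf_irrefl a hf).elim) (fun hf => (h.not_rg_of_rf a b hf hgba).elim)
      (fun _ => rfl)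
    exact (hba (h.pf_inj a b c hPfac hPfbc hca hcb).symm).elim
  by_cases hgbc : Rg b c
  · have hPfca : Pf c a := h.pf_of_unique c a ha0 <| Fin.forall_ne_zero_of_cover hcover
      (fun _ => rfl) (fun hf => (h.not_rg_of_rf c b hf hgbc).elim)
      (fun hf => (h.rf_irrefl c hf).elim)
    by_cases hf0b : Rf 0 b
    · refine ⟨b, c, hPfbc, h.pg_of_unique b c hb0 <| Fin.forall_of_cover hcover ?_ ?_ ?_ ?_⟩
      exacts [fun hg => (h.not_rg_of_rf 0 b hf0b hg).elim, fun hg => (hgba hg).elim,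
        fun hg => (h.rg_irrefl b hg).elim, fun _ => rfl]
    · have hf0c : ¬ Rf 0 c := by
        obtain ⟨r, hgcr⟩ := h.exists_rg c hc0
        obtain rfl := hgc0 r hgcr
        exact fun hf => h.not_rg_of_rf 0 c hf hgcr
      have hPf0a : Pf 0 a := h.pf_of_unique 0 a ha0 <| Fin.forall_ne_zero_of_cover hcover
        (fun _ => rfl) (fun hf => (hf0b hf).elim) (fun hf => (hf0c hf).elim)
      exact (hc0 (h.pf_inj 0 c a hPf0a hPfca ha0 hca.symm).symm).elim
  · have hPgb0 : Pg b 0 := h.pg_of_unique b 0 hb0 <| Fin.forall_of_cover hcover (fun _ => rfl)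
      (fun hg => (hgba hg).elim) (fun hg => (h.rg_irrefl b hg).elim) (fun hg => (hgbc hg).elim)
    have hPgc0 : Pg c 0 := h.pg_of_unique c 0 hc0 hgc0
    exact (hcb (h.pg_inj b c 0 hPgb0 hPgc0 hb0.symm hc0.symm).symm).elim

theorem exists_common_pure (h : IsDropPattern Rf Rg Pf Pg) : ∃ c d, Pf c d ∧ Pg c d := by
  obtain ⟨a, ha0, hf0a⟩ := h.exists_rf 0
  have hga0 : ¬ Rg a 0 := h.not_rg_of_rf 0 a hf0a
  obtain ⟨b, hgab⟩ := h.exists_rg a ha0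
  have hb0 : b ≠ 0 := by rintro rfl; exact hga0 hgab
  have hba : b ≠ a := by rintro rfl; exact h.rg_irrefl b hgab
  obtain ⟨c, hc0, hca, hcb, hcover⟩ := Fin.exists_fourth ha0 hb0 hba.symm
  by_cases hgca : Rg c a
  · exact h.exists_common_pure_of_rg hcover ha0 hb0 hba hca hcb hga0 hgca
  · exact h.exists_common_pure_of_not_rg hcover ha0 hb0 hc0 hba hca hcb hgab hgca

end IsDropPattern

theorem add_mem_NS_tail_of_mem_PF {n : Fin (e + 1) → ℕ} {f : ℤ} (hfT : f ∈ PF (Fin.tail n))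
    (hf : f ∈ PF n) (r : Fin (e + 1)) : f + n r ∈ NS (Fin.tail n) := by
  cases r using Fin.cases with
  | zero => exact NS.mem_tail_of_sub_not_mem (hf.2 0) (by simpa using hf.1)
  | succ i => exact hfT.2 i

section DropPattern

variable {n : Fin 4 → ℕ} {f g : ℤ}

theorem isDropPattern (hmin : MinGen n) (hf0 : 0 ≤ f) (hg0 : 0 ≤ g) (hfT : f ∈ PF (Fin.tail n))
    (hf : f ∈ PF n) (hg : g ∈ PF n) (hfg : f + g ∉ NS n) :
    IsDropPattern (fun r c => f + n r - n c ∈ NS n) (fun c r => g + n c - n r ∈ NS n)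
      (fun r d => ∃ k : ℕ, f + n r = k * n d) (fun c d => ∃ k : ℕ, g + n c = k * n d) where
  not_rg_of_rf r c hfrc hgcr := hfg (by convert NS.add_mem hfrc hgcr using 1; ring)
  rf_irrefl r hf' := hf.1 (by simpa using hf')
  rg_irrefl c hg' := hg.1 (by simpa using hg')
  exists_rf r := by
    have hpos := hmin.pos r
    obtain ⟨i, hi⟩ := NS.exists_sub_mem (add_mem_NS_tail_of_mem_PF hfT hf r) (by omega)
    exact ⟨i.succ, Fin.succ_ne_zero i, NS.tail_subset hi⟩
  pf_of_unique r _ hd0 hd :=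
    NS.exists_eq_natCast_mul_of_mem_tail (add_mem_NS_tail_of_mem_PF hfT hf r) hd0 hd
  exists_rg c _ := by
    have hpos := hmin.pos c
    exact NS.exists_sub_mem (hg.2 c) (by omega)
  pg_of_unique c _ _ hd := NS.exists_eq_natCast_mul (hg.2 c) hd
  pf_inj _ _ _ := fun ⟨_, hk⟩ ⟨_, hk'⟩ => hmin.eq_of_add_eq_natCast_mul hk hk'
  pg_inj _ _ _ := fun ⟨_, hk⟩ ⟨_, hk'⟩ => hmin.eq_of_add_eq_natCast_mul hk hk'

theorem eq_of_add_not_mem_NS (hmin : MinGen n) (hf0 : 0 ≤ f) (hg0 : 0 ≤ g)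
    (hfT : f ∈ PF (Fin.tail n)) (hf : f ∈ PF n) (hg : g ∈ PF n) (hfg : f + g ∉ NS n) : f = g := by
  obtain ⟨c, d, ⟨k, hk⟩, ⟨k', hk'⟩⟩ :=
    (isDropPattern hmin hf0 hg0 hfT hf hg hfg).exists_common_pure
  exact eq_of_add_eq_natCast_mul hf.1 hg.1 (hf.2 d) (hg.2 d) hk hk'

end DropPattern

theorem stmt7_general (n : Fin 4 → ℕ)
    (hmin : MinGen n)
    (m : Fin 3 → ℕ) (hm : ∀ i : Fin 3, m i = n i.succ)
    (F : ℤ) (hF : IsFrob n F) (hAS : AlmostSym n F)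
    (f : ℤ) (hfT : f ∈ PF m)
    (hfS : f ∈ PF n) (hFf : F - f ∉ NS n) :
    2 * f = F := by
  obtain rfl : m = Fin.tail n := funext hm
  have hfF : f ≤ F := not_lt.mp fun h => hfS.1 (hF.2 f h)
  have hFfF : F - f ≤ F := not_lt.mp fun h => hFf (hF.2 _ h)
  have hfg : f + (F - f) ∉ NS n := by simpa using hF.1
  have hfg_eq := eq_of_add_not_mem_NS hmin (by linarith) (by linarith) hfT hfS
    (hAS f hfS.1 hFf).2 hfg
  linarith

theorem stmt7 (n : Fin 4 → ℕ)
    (hpos : ∀ i, 0 < n i)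
    (hgcd : Finset.univ.gcd n = 1)
    (hmin : MinGen n)
    (m : Fin 3 → ℕ) (hm : ∀ i : Fin 3, m i = n i.succ)
    (hgcdT : Finset.univ.gcd m = 1)
    (F : ℤ) (hF : IsFrob n F) (hAS : AlmostSym n F)
    (FT : ℤ) (hFT : IsFrob m FT)
    (f : ℤ) (hfT : f ∈ PF m) (hneT : f ≠ FT)
    (hfS : f ∈ PF n) (hFf : F - f ∉ NS n) :
    2 * f = F :=
  stmt7_general n hmin m hm F hF hAS f hfT hfS hFf
end

section
/- Let S be a numerical semigroup minimally generated by three elements. Then the type of S is at most 2. -/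
-- Sylvester: the Frobenius number of `⟨a, b⟩` is `a * b - a - b`.
lemma le_mul_sub_sub_of_forall_ne {a b : ℤ} (ha : 0 ≤ a) (hb : 0 < b) (hab : IsCoprime a b)
    {w : ℤ} (hw : ∀ α β : ℤ, 0 ≤ α → 0 ≤ β → w ≠ α * a + β * b) :
    w ≤ a * b - a - b := by
  obtain ⟨u, v, huv⟩ := hab
  set α := w * u % b
  have hα : α = w * u - b * (w * u / b) := Int.emod_def (w * u) b
  have hw_eq : w = α * a + (w * v + a * (w * u / b)) * b := by
    linear_combination (-a) * hα - w * huv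
  have hβ : w * v + a * (w * u / b) < 0 := by
    by_contra! h
    exact hw α _ (Int.emod_nonneg _ hb.ne') h hw_eq
  have hα_lt : α < b := Int.emod_lt_of_pos _ hb
  nlinarith

lemma le_of_mul_eq_mul_of_isCoprime {a b c d : ℤ} (hab : IsCoprime a b) (hc : 0 < c)
    (h : c * a = d * b) : b ≤ c :=
  Int.le_of_dvd hc (hab.symm.dvd_of_dvd_mul_right ⟨d, by linear_combination h⟩)

section Semigroup

variable {e : ℕ} (n : Fin e → ℕ)

lemma add_mem_NS {s t : ℤ} (hs : s ∈ NS n) (ht : t ∈ NS n) : s + t ∈ NS n := by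
  obtain ⟨a, rfl⟩ := hs
  obtain ⟨b, rfl⟩ := ht
  exact ⟨a + b, by simp [add_mul, Finset.sum_add_distrib]⟩

lemma sum_sub_mem_NS (a : Fin e → ℕ) {i : Fin e} (hi : a i ≠ 0) :
    ∑ j, (a j : ℤ) * n j - n i ∈ NS n := by
  refine ⟨Function.update a i (a i - 1), ?_⟩
  have ha : a = Function.update a i (a i - 1) + Pi.single i 1 := by
    ext j
    rcases eq_or_ne j i with rfl | hj
    · simp only [Pi.add_apply, Function.update_self, Pi.single_eq_same]
      omega
    · simp [hj]
  conv_lhs => rw [ha]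
  simp [add_mul, Finset.sum_add_distrib, Pi.single_apply]

lemma exists_sub_mem_NS {s : ℤ} (hs : s ∈ NS n) (h0 : s ≠ 0) : ∃ i, s - n i ∈ NS n := by
  obtain ⟨a, rfl⟩ := hs
  obtain ⟨i, hi⟩ : ∃ i, a i ≠ 0 := by
    by_contra! h
    simp [h] at h0
  exact ⟨i, sum_sub_mem_NS n a hi⟩

lemma sub_not_mem_NS_of_mem_PF {f f' : ℤ} (hf : f ∈ PF n) (hf' : f' ∈ PF n) (hne : f ≠ f') :
    f' - f ∉ NS n := by
  intro hs
  obtain ⟨i, hi⟩ := exists_sub_mem_NS n hs (sub_ne_zero.mpr hne.symm)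
  exact hf'.1 (by simpa using add_mem_NS n (hf.2 i) hi)

lemma exists_isRF_of_mem_PF {f : ℤ} (hf : f ∈ PF n) : ∃ A, IsRF n f A := by
  have hrow (i : Fin e) : ∃ a : Fin e → ℕ, a i = 0 ∧ f + n i = ∑ j, (a j : ℤ) * n j := by
    obtain ⟨a, ha⟩ := hf.2 i
    refine ⟨a, ?_, ha⟩
    by_contra h
    exact hf.1 (by simpa [← ha] using sum_sub_mem_NS n a h)
  choose a ha0 ha using hrow
  refine ⟨fun i j => a i j - if i = j then 1 else 0, fun i => by simp [ha0],
    fun i j hij => by simp [hij], fun i => ?_⟩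
  simp [sub_mul, Finset.sum_sub_distrib, ite_mul, ← ha]

lemma NS_comp_perm (σ : Equiv.Perm (Fin e)) : NS (n ∘ σ) = NS n := by
  ext x
  constructor
  · rintro ⟨a, rfl⟩
    refine ⟨a ∘ σ.symm, ?_⟩
    rw [← Equiv.sum_comp σ (fun j => ((a ∘ σ.symm) j : ℤ) * n j)]
    simp
  · rintro ⟨a, rfl⟩
    exact ⟨a ∘ σ, (Equiv.sum_comp σ fun j => (a j : ℤ) * n j).symm⟩

lemma PF_comp_perm (σ : Equiv.Perm (Fin e)) : PF (n ∘ σ) = PF n := by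
  ext x
  simp only [PF, NS_comp_perm, Set.mem_ofPred_eq, Function.comp_apply]
  exact and_congr Iff.rfl ⟨fun h i => by simpa using h (σ.symm i), fun h i => h (σ i)⟩

end Semigroup

section ThreeGenerators

variable {n : Fin 3 → ℕ} {f f' : ℤ} {A A' : Matrix (Fin 3) (Fin 3) ℤ}

lemma mem_NS_three {w : ℤ} (a b c : ℤ) (ha : 0 ≤ a) (hb : 0 ≤ b) (hc : 0 ≤ c)
    (hw : w = a * n 0 + b * n 1 + c * n 2) : w ∈ NS n :=
  ⟨![a.toNat, b.toNat, c.toNat], by simp [Fin.sum_univ_three, ha, hb, hc, hw]⟩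

namespace IsRF

lemma row_zero (hA : IsRF n f A) : f = A 0 1 * n 1 + A 0 2 * n 2 - n 0 := by
  have h := hA.2.2 0
  simp only [Fin.sum_univ_three, hA.1 0] at h
  linarith

lemma row_one (hA : IsRF n f A) : f = A 1 0 * n 0 + A 1 2 * n 2 - n 1 := by
  have h := hA.2.2 1
  simp only [Fin.sum_univ_three, hA.1 1] at h
  linarith

lemma row_two (hA : IsRF n f A) : f = A 2 0 * n 0 + A 2 1 * n 1 - n 2 := by
  have h := hA.2.2 2
  simp only [Fin.sum_univ_three, hA.1 2] at h
  linarith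

lemma entry_nonneg (hA : IsRF n f A) (i j : Fin 3) (hij : i ≠ j := by decide) : 0 ≤ A i j :=
  hA.2.1 i j hij

lemma entry_zero_two_lt_of_lt (hf : f ∈ PF n) (hf' : f' ∈ PF n) (hA : IsRF n f A)
    (hA' : IsRF n f' A') (hn : 0 < n 1) (h : A 0 1 < A' 0 1) : A' 0 2 < A 0 2 := by
  by_contra! hC
  rcases eq_or_ne f f' with rfl | hne
  · nlinarith [hA.row_zero, hA'.row_zero]
  · exact sub_not_mem_NS_of_mem_PF n hf hf' hne <|
      mem_NS_three 0 (A' 0 1 - A 0 1) (A' 0 2 - A 0 2) le_rfl (by linarith) (by linarith)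
        (by linear_combination hA'.row_zero - hA.row_zero)

lemma eq_of_entry_zero_one_eq (hf : f ∈ PF n) (hf' : f' ∈ PF n) (hA : IsRF n f A)
    (hA' : IsRF n f' A') (h : A 0 1 = A' 0 1) : f = f' := by
  by_contra hne
  rcases le_total (A 0 2) (A' 0 2) with hC | hC
  · exact sub_not_mem_NS_of_mem_PF n hf hf' hne <|
      mem_NS_three 0 0 (A' 0 2 - A 0 2) le_rfl le_rfl (by linarith)
        (by linear_combination hA'.row_zero - hA.row_zero - n 1 * h)
  · exact sub_not_mem_NS_of_mem_PF n hf' hf (Ne.symm hne) <|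
      mem_NS_three 0 0 (A 0 2 - A' 0 2) le_rfl le_rfl (by linarith)
        (by linear_combination hA.row_zero - hA'.row_zero + n 1 * h)

lemma entry_one_two_lt_of_lt (hA : IsRF n f A) (hA' : IsRF n f' A') (hf' : f' ∉ NS n)
    (h : A 0 1 < A' 0 1) : A 1 2 < A 0 2 := by
  by_contra! hC
  exact hf' <| mem_NS_three (A 1 0) (A' 0 1 - A 0 1 - 1) (A' 0 2 - A 0 2 + A 1 2)
    (hA.entry_nonneg 1 0) (by linarith) (by linarith [hA'.entry_nonneg 0 2])
    (by linear_combination hA'.row_zero - hA.row_zero + hA.row_one)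

lemma entry_two_one_lt_of_lt (hA : IsRF n f A) (hA' : IsRF n f' A') (hf' : f' ∉ NS n)
    (h : A 0 2 < A' 0 2) : A 2 1 < A 0 1 := by
  by_contra! hB
  exact hf' <| mem_NS_three (A 2 0) (A' 0 1 - A 0 1 + A 2 1) (A' 0 2 - A 0 2 - 1)
    (hA.entry_nonneg 2 0) (by linarith [hA'.entry_nonneg 0 1]) (by linarith)
    (by linear_combination hA'.row_zero - hA.row_zero + hA.row_two)

lemma add_one_mul_eq_add_one_mul (hA : IsRF n f A) (hf : f ∉ NS n) (h12 : A 1 2 < A 0 2)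
    (h21 : A 2 1 < A 0 1) :
    (A 2 1 + 1) * n 1 = (A 1 2 + 1) * n 2 := by
  have h20 : A 2 0 = A 1 0 := by
    rcases lt_trichotomy (A 2 0) (A 1 0) with h | h | h
    · exact absurd (mem_NS_three (A 1 0 - A 2 0 - 1) (A 0 1 - A 2 1 - 1) (A 0 2 + A 1 2 + 1)
        (by linarith) (by linarith) (by linarith [hA.entry_nonneg 1 2])
        (by linear_combination hA.row_zero + hA.row_one - hA.row_two)) hf
    · exact h
    · exact absurd (mem_NS_three (A 2 0 - A 1 0 - 1) (A 0 1 + A 2 1 + 1) (A 0 2 - A 1 2 - 1)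
        (by linarith) (by linarith [hA.entry_nonneg 2 1]) (by linarith)
        (by linear_combination hA.row_zero + hA.row_two - hA.row_one)) hf
  linear_combination hA.row_one - hA.row_two - n 0 * h20

lemma mul_lt_of_le_entries (hA : IsRF n f A) (hf : f ∉ NS n) {g y₁ z₁ : ℤ} (hg : 0 < g)
    (hy : n 1 = y₁ * g) (hz : n 2 = z₁ * g) (hy₁ : 0 < y₁) (hz₁ : 0 < z₁)
    (hcop : IsCoprime y₁ z₁) (hB : z₁ ≤ A 0 1) (hC : y₁ ≤ A 0 2) : y₁ * z₁ < n 0 := by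
  have hw : A 0 1 * y₁ + A 0 2 * z₁ - n 0 ≤ y₁ * z₁ - y₁ - z₁ :=
    le_mul_sub_sub_of_forall_ne hy₁.le hz₁ hcop fun α β hα hβ heq => hf <|
      mem_NS_three (g - 1) α β (by linarith) hα hβ
        (by linear_combination hA.row_zero + g * heq + (A 0 1 - α) * hy + (A 0 2 - β) * hz)
  nlinarith [mul_le_mul_of_nonneg_right hB hy₁.le, mul_le_mul_of_nonneg_right hC hz₁.le]

end IsRF

theorem mul_lt_of_isRF_median (hpos : ∀ i, 0 < n i) {flo fm fhi : ℤ}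
    {Alo Am Ahi : Matrix (Fin 3) (Fin 3) ℤ} (hlo : flo ∈ PF n) (hm : fm ∈ PF n) (hhi : fhi ∈ PF n)
    (hAlo : IsRF n flo Alo) (hAm : IsRF n fm Am) (hAhi : IsRF n fhi Ahi)
    (hlo_m : Alo 0 1 < Am 0 1) (hm_hi : Am 0 1 < Ahi 0 1) :
    n 1 * n 2 < n 0 * Nat.gcd (n 1) (n 2) ^ 2 := by
  obtain ⟨y₁, z₁, hcop, hy, hz⟩ := Nat.exists_coprime (n 1) (n 2)
  set g := Nat.gcd (n 1) (n 2)
  have hg : 0 < g := Nat.gcd_pos_of_pos_left _ (hpos 1)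
  have hy₁ : 0 < y₁ := Nat.pos_of_mul_pos_right (hy ▸ hpos 1)
  have hz₁ : 0 < z₁ := Nat.pos_of_mul_pos_right (hz ▸ hpos 2)
  have h12 := hAm.entry_one_two_lt_of_lt hAhi hhi.1 hm_hi
  have h21 := hAm.entry_two_one_lt_of_lt hAlo hlo.1
    (hAlo.entry_zero_two_lt_of_lt hlo hm hAm (hpos 1) hlo_m)
  have hrel : (Am 2 1 + 1) * y₁ = (Am 1 2 + 1) * z₁ := by
    refine mul_right_cancel₀ (b := (g : ℤ)) (by positivity) ?_
    have := hAm.add_one_mul_eq_add_one_mul hm.1 h12 h21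
    push_cast [hy, hz] at this
    linear_combination this
  have hcop' : IsCoprime (y₁ : ℤ) z₁ := Nat.isCoprime_iff_coprime.mpr hcop
  have hB := le_of_mul_eq_mul_of_isCoprime hcop' (by linarith [hAm.entry_nonneg 2 1]) hrel
  have hC := le_of_mul_eq_mul_of_isCoprime hcop'.symm
    (by linarith [hAm.entry_nonneg 1 2]) hrel.symm
  have hlt : y₁ * z₁ < n 0 := by
    exact_mod_cast hAm.mul_lt_of_le_entries hm.1 (g := g) (by exact_mod_cast hg)
      (by exact_mod_cast hy) (by exact_mod_cast hz) (by exact_mod_cast hy₁)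
      (by exact_mod_cast hz₁) hcop' (by linarith) (by linarith)
  calc n 1 * n 2 = y₁ * z₁ * g ^ 2 := by rw [hy, hz]; ring
    _ < n 0 * g ^ 2 := Nat.mul_lt_mul_of_pos_right hlt (by positivity)

theorem mul_lt_of_two_lt_ncard_PF (hpos : ∀ i, 0 < n i) (h3 : 2 < (PF n).ncard) :
    n 1 * n 2 < n 0 * Nat.gcd (n 1) (n 2) ^ 2 := by
  obtain ⟨t, ht, ht3⟩ := Set.exists_subset_card_eq h3
  obtain ⟨f₁, f₂, f₃, h12, h13, h23, rfl⟩ := Set.ncard_eq_three.mp ht3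
  set f := ![f₁, f₂, f₃]
  have hf : Function.Injective f := by
    intro i j h
    fin_cases i <;> fin_cases j <;> simp_all [f, eq_comm]
  have hPF (i : Fin 3) : f i ∈ PF n := ht (by fin_cases i <;> simp [f])
  choose A hA using fun i => exists_isRF_of_mem_PF n (hPF i)
  have hB : Function.Injective fun i => A i 0 1 := fun i j h =>
    hf ((hA i).eq_of_entry_zero_one_eq (hPF i) (hPF j) (hA j) h)
  have hsorted := (Tuple.monotone_sort _).strictMono_of_injective
    (hB.comp (Tuple.sort fun i => A i 0 1).injective)
  exact mul_lt_of_isRF_median hpos (hPF _) (hPF _) (hPF _) (hA _) (hA _) (hA _)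
    (hsorted (show (0 : Fin 3) < 1 by decide)) (hsorted (show (1 : Fin 3) < 2 by decide))

end ThreeGenerators

lemma mul_le_mul_gcd_sq_of_lt {a b c : ℕ} (ha : 0 < a) (hcop : Nat.Coprime (a.gcd c) (a.gcd b))
    (h : a * c < b * a.gcd c ^ 2) : c * a.gcd b ^ 2 ≤ a * b := by
  by_contra! h'
  have hle : a.gcd c * a.gcd b ≤ a :=
    Nat.le_of_dvd ha (hcop.mul_dvd_of_dvd_of_dvd (Nat.gcd_dvd_left a c) (Nat.gcd_dvd_left a b))
  have := Nat.mul_lt_mul'' h h'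
  have := Nat.mul_le_mul_left (b * c) (Nat.pow_le_pow_left hle 2)
  nlinarith

theorem stmt13_general (n : Fin 3 → ℕ)
    (hpos : ∀ i, 0 < n i)
    (hgcd : Finset.univ.gcd n = 1) :
    (PF n).ncard ≤ 2 := by
  by_contra! h3
  have hcop : Nat.Coprime ((n 0).gcd (n 2)) ((n 0).gcd (n 1)) := by
    refine Nat.dvd_one.mp (hgcd ▸ Finset.dvd_gcd fun i _ => ?_)
    fin_cases i
    · exact (Nat.gcd_dvd_left _ _).trans (Nat.gcd_dvd_left _ _)
    · exact (Nat.gcd_dvd_right _ _).trans (Nat.gcd_dvd_right _ _)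
    · exact (Nat.gcd_dvd_left _ _).trans (Nat.gcd_dvd_right _ _)
  have h1 : n 0 * n 2 < n 1 * (n 0).gcd (n 2) ^ 2 := by
    simpa [Equiv.swap_apply_of_ne_of_ne] using
      mul_lt_of_two_lt_ncard_PF (n := n ∘ Equiv.swap 0 1) (fun i => hpos _)
        (by rwa [PF_comp_perm])
  have h2 : n 0 * n 1 < n 2 * (n 0).gcd (n 1) ^ 2 := by
    simpa [Equiv.swap_apply_of_ne_of_ne, mul_comm (n 1), Nat.gcd_comm (n 1)] using
      mul_lt_of_two_lt_ncard_PF (n := n ∘ Equiv.swap 0 2) (fun i => hpos _)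
        (by rwa [PF_comp_perm])
  exact (mul_le_mul_gcd_sq_of_lt (hpos 0) hcop h1).not_gt h2

theorem stmt13 (n : Fin 3 → ℕ)
    (hpos : ∀ i, 0 < n i)
    (hgcd : Finset.univ.gcd n = 1)
    (hmin : MinGen n) :
    (PF n).ncard ≤ 2 :=
  stmt13_general n hpos hgcd
end
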